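/- arXiv:cond-mat/9301017 — 5 statements merged into one kernel-verified Lean document; each statement's English description precedes it below -/
import Mathlib

section
/- Let Φ be a two-body translation-invariant potential of range r on Ω = (ℤ^d → Fin n). If X is a ground-state configuration of Φ, then X has minimal energy density: e(X) ≤ e(Y) for every configuration Y ∈ Ω. -/
open Filter MeasureTheory

namespace QC

/-- A lattice site in `ℤ^d`. -/
abbrev Site (d : ℕ) := Fin d → ℤ

/-- A configuration: an assignment of one of `n` particle types to each site of `ℤ^d`. -/
abbrev Config (d n : ℕ) := Site d → Fin n

/-- A two-body translation-invariant potential of range `r` on `ℤ^d` with `n` particle types: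
`pot c s t` is the energy of a pair of particles of types `s, t` at sites `a, b` with
`a - b = c` (only the values at `c ≠ 0` are ever used). -/
structure Potential (d n : ℕ) (r : ℝ) where
  pot : Site d → Fin n → Fin n → ℝ
  symm : ∀ c s t, pot (-c) t s = pot c s t
  finite_range : ∀ c : Site d, r < ‖c‖ → ∀ s t, pot c s t = 0

variable {d n : ℕ} {r : ℝ}

/-- `Y` is a local excitation of `X` (`Y ~ X`): they differ at finitely many sites. -/
def Excites (Y X : Config d n) : Prop := {a | Y a ≠ X a}.Finite

/-- The relative Hamiltonian `H(Y,X)`: the sum over unordered pairs of distinct sites of the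
difference of pair energies (each unordered pair is counted twice in the ordered sum,
whence the factor `1/2`). -/
noncomputable def relHam (Φ : Potential d n r) (Y X : Config d n) : ℝ :=
  (1 / 2) * ∑ᶠ p : Site d × Site d,
    (if p.1 ≠ p.2 then
      Φ.pot (p.1 - p.2) (Y p.1) (Y p.2) - Φ.pot (p.1 - p.2) (X p.1) (X p.2)
    else 0)

/-- `X` is a ground-state configuration of `Φ`. -/
def IsGroundState (Φ : Potential d n r) (X : Config d n) : Prop :=
  ∀ Y : Config d n, Excites Y X → 0 ≤ relHam Φ Y X

/-- `H_Λ(X)`: the energy of `X` in the finite region `Λ` (sum over unordered pairs of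
distinct sites of `Λ`). -/
noncomputable def boxEnergy (Φ : Potential d n r) (Λ : Finset (Site d)) (X : Config d n) : ℝ :=
  (1 / 2) * ∑ a ∈ Λ, ∑ b ∈ Λ, (if a ≠ b then Φ.pot (a - b) (X a) (X b) else 0)

/-- The box `Λ_l = {-l,…,l}^d`. -/
noncomputable def box (d : ℕ) (l : ℕ) : Finset (Site d) :=
  Fintype.piFinset fun _ => Finset.Icc (-(l : ℤ)) (l : ℤ)

/-- The energy density `e(X) = liminf_{l→∞} H_{Λ_l}(X)/|Λ_l|`. -/
noncomputable def energyDensity (Φ : Potential d n r) (X : Config d n) : ℝ :=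
  liminf (fun l : ℕ => boxEnergy Φ (box d l) X / (box d l).card) atTop

/-- The translation `τ_a`. -/
def translate (a : Site d) (X : Config d n) : Config d n := fun b => X (b - a)

/-- `X` is periodic if it is invariant under some nonzero translation. -/
def IsPeriodic (X : Config d n) : Prop := ∃ a : Site d, a ≠ 0 ∧ translate a X = X

/-- For a `{0,1}`-valued potential: the unordered pair `{a,b}` is a broken bond of `Y`. -/
def IsBrokenBond (Φ : Potential d n r) (Y : Config d n) (a b : Site d) : Prop :=
  a ≠ b ∧ Φ.pot (a - b) (Y a) (Y b) = 1

/-- `B(Y)`: the number of broken bonds (unordered pairs) of `Y`. -/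
noncomputable def brokenCount (Φ : Potential d n r) (Y : Config d n) : ℕ :=
  Nat.card {p : Sym2 (Site d) // ∃ a b : Site d, p = s(a, b) ∧ IsBrokenBond Φ Y a b}

/-- `B_Λ(Y)`: the number of broken bonds of `Y` with both sites in `Λ`. -/
noncomputable def brokenCountIn (Φ : Potential d n r) (Λ : Finset (Site d))
    (Y : Config d n) : ℕ :=
  Nat.card {p : Sym2 (Site d) //
    ∃ a b : Site d, p = s(a, b) ∧ a ∈ Λ ∧ b ∈ Λ ∧ IsBrokenBond Φ Y a b}

/-- The broken-bond setting: `Φ` takes only the values `0` and `1`, some configuration has no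
broken bonds, the ground-state configurations are exactly the configurations without broken
bonds, and consequently `H(Y,X) = B(Y)` for any ground-state configuration `X` and `Y ~ X`. -/
structure BrokenBondSetting (Φ : Potential d n r) : Prop where
  vals : ∀ c s t, Φ.pot c s t = 0 ∨ Φ.pot c s t = 1
  exists_perfect : ∃ X : Config d n, ∀ a b, ¬ IsBrokenBond Φ X a b
  ground_iff : ∀ X : Config d n, IsGroundState Φ X ↔ ∀ a b, ¬ IsBrokenBond Φ X a b
  relHam_eq : ∀ X Y : Config d n, IsGroundState Φ X → Excites Y X →
    relHam Φ Y X = brokenCount Φ Y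

/-- An arrangement: a single particle type, or a pair of particle types at relative
position `c` (the arrangement `pair c s t` is identified with `pair (-c) t s`). -/
inductive Arr (d n : ℕ) where
  | single (s : Fin n) : Arr d n
  | pair (c : Site d) (s t : Fin n) : Arr d n

/-- An arrangement has range `< r` if it is a single particle, or a pair at relative
position `c ≠ 0` with `‖c‖ < r`. -/
def Arr.valid (r : ℝ) : Arr d n → Prop
  | .single _ => True
  | .pair c _ _ => c ≠ 0 ∧ ‖c‖ < r

/-- The identification `(c,s,t) ↦ (-c,t,s)` of pair arrangements. -/
def Arr.mirror : Arr d n → Arr d n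
  | .single s => .single s
  | .pair c s t => .pair (-c) t s

/-- `n_ar(Y,X)`: the difference between the number of occurrences of the arrangement `ar`
in `Y` and in `X` (a finite sum when `Y ~ X`). -/
noncomputable def arrCount (Y X : Config d n) : Arr d n → ℤ
  | .single s => ∑ᶠ a : Site d,
      ((if Y a = s then (1 : ℤ) else 0) - (if X a = s then (1 : ℤ) else 0))
  | .pair c s t => ∑ᶠ a : Site d,
      ((if Y a = s ∧ Y (a + c) = t then (1 : ℤ) else 0)
        - (if X a = s ∧ X (a + c) = t then (1 : ℤ) else 0))

/-- The strict boundary condition for the arrangement `ar` with constant `C`: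
`|n_ar(Y,X)| < C·B(Y)` for every ground-state configuration `X` and every `Y ~ X`. -/
def StrictBoundary (Φ : Potential d n r) (ar : Arr d n) (C : ℝ) : Prop :=
  0 < C ∧ ∀ X Y : Config d n, IsGroundState Φ X → Excites Y X →
    |(arrCount Y X ar : ℝ)| < C * (brokenCount Φ Y : ℝ)

/-- A perturbation of range `< r`: a real number for every arrangement of range `< r`,
respecting the identification `(c,s,t) ~ (-c,t,s)` and vanishing on arrangements of
range `≥ r`. -/
structure Perturbation (d n : ℕ) (r : ℝ) where
  val : Arr d n → ℝ
  symm : ∀ ar : Arr d n, val ar.mirror = val ar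
  finite_range : ∀ ar : Arr d n, ¬ ar.valid r → val ar = 0

/-- `Σ_ar n_ar(Y,X)·Ψ(ar)`, the sum running over arrangements; since each pair arrangement
has exactly two representatives `(c,s,t)` and `(-c,t,s)`, the pair part carries a
factor `1/2`. -/
noncomputable def pertSum (Ψ : Perturbation d n r) (Y X : Config d n) : ℝ :=
  (∑ s : Fin n, (arrCount Y X (.single s) : ℝ) * Ψ.val (.single s))
    + (1 / 2) * ∑ᶠ c : Site d, ∑ s : Fin n, ∑ t : Fin n,
        (arrCount Y X (.pair c s t) : ℝ) * Ψ.val (.pair c s t)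

/-- The perturbed relative Hamiltonian `H''(Y,X) = H(Y,X) + Σ_ar n_ar(Y,X)·Ψ(ar)`. -/
noncomputable def pertHam (Φ : Potential d n r) (Ψ : Perturbation d n r)
    (Y X : Config d n) : ℝ :=
  relHam Φ Y X + pertSum Ψ Y X

/-- `X` is a ground-state configuration of the perturbed Hamiltonian `H'' = H + H'`. -/
def IsPerturbedGroundState (Φ : Potential d n r) (Ψ : Perturbation d n r)
    (X : Config d n) : Prop :=
  ∀ Y : Config d n, Excites Y X → 0 ≤ pertHam Φ Ψ Y X

/-- `Σ_ar C_ar·|Ψ(ar)|`, the sum running over arrangements (pair arrangements,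
having two representatives each, carry a factor `1/2`). -/
noncomputable def weightedNorm (C : Arr d n → ℝ) (Ψ : Perturbation d n r) : ℝ :=
  (∑ s : Fin n, C (.single s) * |Ψ.val (.single s)|)
    + (1 / 2) * ∑ᶠ c : Site d, ∑ s : Fin n, ∑ t : Fin n,
        C (.pair c s t) * |Ψ.val (.pair c s t)|

/-- `Σ_ar |Ψ(ar)|`. -/
noncomputable def pertNorm (Ψ : Perturbation d n r) : ℝ :=
  weightedNorm (fun _ => (1 : ℝ)) Ψ


section Aux

variable {d n : ℕ} {r : ℝ}

lemma mem_box_iff {l : ℕ} {a : Site d} : a ∈ box d l ↔ ∀ i, |a i| ≤ (l : ℤ) := by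
  simp [box, Fintype.mem_piFinset, Finset.mem_Icc, abs_le]

lemma box_mono {l m : ℕ} (h : l ≤ m) : box d l ⊆ box d m := by
  intro a ha
  rw [mem_box_iff] at ha ⊢
  intro i
  exact le_trans (ha i) (by exact_mod_cast h)

lemma card_box (l : ℕ) : (box d l).card = (2 * l + 1) ^ d := by
  rw [box, Fintype.card_piFinset]
  have : (Finset.Icc (-(l : ℤ)) (l : ℤ)).card = 2 * l + 1 := by
    rw [Int.card_Icc]
    omega
  simp [this]

/-- The bound `M`: sum of all `|pot|` values over the ball of radius `⌈r⌉₊`. -/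
noncomputable def Mbound (Φ : Potential d n r) : ℝ :=
  ∑ c ∈ box d ⌈r⌉₊, ∑ s : Fin n, ∑ t : Fin n, |Φ.pot c s t|

variable (Φ : Potential d n r)

lemma Mbound_nonneg : 0 ≤ Mbound Φ := by
  refine Finset.sum_nonneg fun c _ => Finset.sum_nonneg fun s _ => Finset.sum_nonneg
    fun t _ => abs_nonneg _

lemma pot_mem_ball {c : Site d} {s t : Fin n} (h : Φ.pot c s t ≠ 0) : c ∈ box d ⌈r⌉₊ := by
  have h1 : ‖c‖ ≤ r := not_lt.1 fun hlt => h (Φ.finite_range c hlt s t)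
  rw [mem_box_iff]
  intro i
  have h2 := norm_le_pi_norm c i
  rw [Int.norm_eq_abs] at h2
  have h3 : (|c i| : ℝ) ≤ (⌈r⌉₊ : ℝ) := le_trans (le_trans h2 h1) (Nat.le_ceil r)
  exact_mod_cast h3

lemma abs_pot_le (c : Site d) (s t : Fin n) : |Φ.pot c s t| ≤ Mbound Φ := by
  by_cases h : Φ.pot c s t = 0
  · simpa [h] using Mbound_nonneg Φ
  · calc |Φ.pot c s t| ≤ ∑ t' : Fin n, |Φ.pot c s t'| :=
          Finset.single_le_sum (f := fun t' => |Φ.pot c s t'|)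
            (fun _ _ => abs_nonneg _) (Finset.mem_univ t)
      _ ≤ ∑ s' : Fin n, ∑ t' : Fin n, |Φ.pot c s' t'| :=
          Finset.single_le_sum (f := fun s' => ∑ t' : Fin n, |Φ.pot c s' t'|)
            (fun _ _ => Finset.sum_nonneg fun _ _ => abs_nonneg _) (Finset.mem_univ s)
      _ ≤ Mbound Φ :=
          Finset.single_le_sum (f := fun c' => ∑ s' : Fin n, ∑ t' : Fin n, |Φ.pot c' s' t'|)
            (fun _ _ => Finset.sum_nonneg fun _ _ => Finset.sum_nonneg fun _ _ => abs_nonneg _)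
            (pot_mem_ball Φ h)

/-- The pair-energy term. -/
noncomputable def eTerm (Z : Config d n) (a b : Site d) : ℝ :=
  if a ≠ b then Φ.pot (a - b) (Z a) (Z b) else 0

lemma boxEnergy_eq (Λ : Finset (Site d)) (Z : Config d n) :
    boxEnergy Φ Λ Z = (1 / 2) * ∑ a ∈ Λ, ∑ b ∈ Λ, eTerm Φ Z a b := rfl

lemma abs_eTerm_le (Z : Config d n) (a b : Site d) : |eTerm Φ Z a b| ≤ Mbound Φ := by
  rw [eTerm]
  split
  · exact abs_pot_le Φ _ _ _
  · simpa using Mbound_nonneg Φ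

lemma eTerm_support {Z : Config d n} {a b : Site d} (h : eTerm Φ Z a b ≠ 0) :
    a - b ∈ box d ⌈r⌉₊ := by
  rw [eTerm] at h
  by_cases hab : a ≠ b
  · rw [if_pos hab] at h
    exact pot_mem_ball Φ h
  · simp [hab] at h

/-- Generic bound for a row-sum of absolute values with finitely supported terms. -/
lemma sum_abs_le_row {α : Type*} [DecidableEq α] (Q s : Finset α) (t : α → ℝ) (f : α → α)
    (hf : Function.Injective f)
    (hsupp : ∀ x, t x ≠ 0 → f x ∈ s) {K : ℝ} (hK : 0 ≤ K)
    (hbdd : ∀ x, |t x| ≤ K) : ∑ x ∈ Q, |t x| ≤ K * s.card := by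
  classical
  have h0 : ∑ x ∈ Q.filter (fun x => f x ∈ s), |t x| = ∑ x ∈ Q, |t x| :=
    Finset.sum_filter_of_ne (fun x _ h => hsupp x (fun h0 => h (by simp [h0])))
  rw [← h0]
  have hcard : (Q.filter (fun x => f x ∈ s)).card ≤ s.card :=
    Finset.card_le_card_of_injOn f (fun a ha => (Finset.mem_filter.1 ha).2)
      (hf.injOn)
  calc ∑ x ∈ Q.filter (fun x => f x ∈ s), |t x|
      ≤ ∑ _x ∈ Q.filter (fun x => f x ∈ s), K := Finset.sum_le_sum fun x _ => hbdd x
    _ = (Q.filter (fun x => f x ∈ s)).card * K := by rw [Finset.sum_const, nsmul_eq_mul]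
    _ ≤ s.card * K := by
        exact mul_le_mul_of_nonneg_right (by exact_mod_cast hcard) hK
    _ = K * s.card := mul_comm _ _

lemma row_le (Z : Config d n) (a : Site d) (Q : Finset (Site d)) :
    ∑ b ∈ Q, |eTerm Φ Z a b| ≤ Mbound Φ * (box d ⌈r⌉₊).card := by
  refine sum_abs_le_row Q (box d ⌈r⌉₊) (eTerm Φ Z a) (fun b => a - b)
    (sub_right_injective) ?_ (Mbound_nonneg Φ) (abs_eTerm_le Φ Z a)
  exact fun b hb => eTerm_support Φ hb

lemma col_le (Z : Config d n) (b : Site d) (Q : Finset (Site d)) :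
    ∑ a ∈ Q, |eTerm Φ Z a b| ≤ Mbound Φ * (box d ⌈r⌉₊).card := by
  refine sum_abs_le_row Q (box d ⌈r⌉₊) (fun a => eTerm Φ Z a b) (fun a => a - b)
    (sub_left_injective) ?_ (Mbound_nonneg Φ) (fun a => abs_eTerm_le Φ Z a b)
  exact fun a ha => eTerm_support Φ ha

end Aux

section Aux2

variable {d n : ℕ} {r : ℝ} (Φ : Potential d n r)

lemma abs_boxEnergy_le (Λ : Finset (Site d)) (Z : Config d n) :
    |boxEnergy Φ Λ Z| ≤ (1 / 2) * (Mbound Φ * (box d ⌈r⌉₊).card) * Λ.card := by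
  rw [boxEnergy_eq, abs_mul]
  have h1 : |(1 : ℝ) / 2| = 1 / 2 := by norm_num
  rw [h1, mul_assoc]
  refine mul_le_mul_of_nonneg_left ?_ (by norm_num)
  calc |∑ a ∈ Λ, ∑ b ∈ Λ, eTerm Φ Z a b| ≤ ∑ a ∈ Λ, |∑ b ∈ Λ, eTerm Φ Z a b| :=
        Finset.abs_sum_le_sum_abs _ _
    _ ≤ ∑ a ∈ Λ, ∑ b ∈ Λ, |eTerm Φ Z a b| :=
        Finset.sum_le_sum fun a _ => Finset.abs_sum_le_sum_abs _ _
    _ ≤ ∑ _a ∈ Λ, Mbound Φ * (box d ⌈r⌉₊).card :=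
        Finset.sum_le_sum fun a _ => row_le Φ Z a Λ
    _ = Mbound Φ * (box d ⌈r⌉₊).card * Λ.card := by
        rw [Finset.sum_const, nsmul_eq_mul, mul_comm]

lemma boxEnergy_congr {Λ : Finset (Site d)} {Z W : Config d n}
    (h : ∀ a ∈ Λ, Z a = W a) : boxEnergy Φ Λ Z = boxEnergy Φ Λ W := by
  rw [boxEnergy, boxEnergy]
  congr 1
  refine Finset.sum_congr rfl fun a ha => Finset.sum_congr rfl fun b hb => ?_
  rw [h a ha, h b hb]

lemma boxEnergy_diff_le {Λ Q : Finset (Site d)} (h : Λ ⊆ Q) (Z : Config d n) :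
    |boxEnergy Φ Q Z - boxEnergy Φ Λ Z|
      ≤ Mbound Φ * (box d ⌈r⌉₊).card * ((Q.card : ℝ) - Λ.card) := by
  classical
  have hprod : ∀ (S : Finset (Site d)), boxEnergy Φ S Z
      = (1 / 2) * ∑ p ∈ S ×ˢ S, eTerm Φ Z p.1 p.2 := by
    intro S
    rw [boxEnergy_eq, Finset.sum_product]
  have hsub : Λ ×ˢ Λ ⊆ Q ×ˢ Q := Finset.product_subset_product h h
  have hsplit : boxEnergy Φ Q Z - boxEnergy Φ Λ Z
      = (1 / 2) * ∑ p ∈ Q ×ˢ Q \ Λ ×ˢ Λ, eTerm Φ Z p.1 p.2 := by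
    rw [hprod, hprod, ← mul_sub]
    congr 1
    have := Finset.sum_sdiff (f := fun p : Site d × Site d => eTerm Φ Z p.1 p.2) hsub
    linarith
  rw [hsplit, abs_mul]
  have h1 : |(1 : ℝ) / 2| = 1 / 2 := by norm_num
  rw [h1]
  have hsub2 : Q ×ˢ Q \ Λ ×ˢ Λ ⊆ ((Q \ Λ) ×ˢ Q) ∪ (Q ×ˢ (Q \ Λ)) := by
    intro p hp
    rw [Finset.mem_sdiff, Finset.mem_product, Finset.mem_product] at hp
    obtain ⟨⟨h1', h2'⟩, h3'⟩ := hp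
    rw [Finset.mem_union, Finset.mem_product, Finset.mem_product, Finset.mem_sdiff,
      Finset.mem_sdiff]
    by_cases hΛ : p.1 ∈ Λ
    · exact Or.inr ⟨h1', h2', fun hc => h3' ⟨hΛ, hc⟩⟩
    · exact Or.inl ⟨⟨h1', hΛ⟩, h2'⟩
  have key : |∑ p ∈ Q ×ˢ Q \ Λ ×ˢ Λ, eTerm Φ Z p.1 p.2|
      ≤ 2 * (Mbound Φ * (box d ⌈r⌉₊).card) * ((Q \ Λ).card : ℝ) := by
    calc |∑ p ∈ Q ×ˢ Q \ Λ ×ˢ Λ, eTerm Φ Z p.1 p.2|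
        ≤ ∑ p ∈ Q ×ˢ Q \ Λ ×ˢ Λ, |eTerm Φ Z p.1 p.2| := Finset.abs_sum_le_sum_abs _ _
      _ ≤ ∑ p ∈ ((Q \ Λ) ×ˢ Q) ∪ (Q ×ˢ (Q \ Λ)), |eTerm Φ Z p.1 p.2| :=
          Finset.sum_le_sum_of_subset_of_nonneg hsub2 (fun _ _ _ => abs_nonneg _)
      _ ≤ ∑ p ∈ (Q \ Λ) ×ˢ Q, |eTerm Φ Z p.1 p.2|
            + ∑ p ∈ Q ×ˢ (Q \ Λ), |eTerm Φ Z p.1 p.2| := by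
          have := Finset.sum_union_inter (s₁ := (Q \ Λ) ×ˢ Q) (s₂ := Q ×ˢ (Q \ Λ))
            (f := fun p : Site d × Site d => |eTerm Φ Z p.1 p.2|)
          have hnn : 0 ≤ ∑ p ∈ ((Q \ Λ) ×ˢ Q) ∩ (Q ×ˢ (Q \ Λ)), |eTerm Φ Z p.1 p.2| :=
            Finset.sum_nonneg fun _ _ => abs_nonneg _
          linarith
      _ ≤ ((Q \ Λ).card : ℝ) * (Mbound Φ * (box d ⌈r⌉₊).card)
            + ((Q \ Λ).card : ℝ) * (Mbound Φ * (box d ⌈r⌉₊).card) := by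
          gcongr ?_ + ?_
          · rw [Finset.sum_product]
            calc ∑ a ∈ Q \ Λ, ∑ b ∈ Q, |eTerm Φ Z a b|
                ≤ ∑ _a ∈ Q \ Λ, Mbound Φ * (box d ⌈r⌉₊).card :=
                  Finset.sum_le_sum fun a _ => row_le Φ Z a Q
              _ = ((Q \ Λ).card : ℝ) * (Mbound Φ * (box d ⌈r⌉₊).card) := by
                  rw [Finset.sum_const, nsmul_eq_mul]
          · rw [Finset.sum_product_right]
            calc ∑ b ∈ Q \ Λ, ∑ a ∈ Q, |eTerm Φ Z a b|
                ≤ ∑ _b ∈ Q \ Λ, Mbound Φ * (box d ⌈r⌉₊).card :=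
                  Finset.sum_le_sum fun b _ => col_le Φ Z b Q
              _ = ((Q \ Λ).card : ℝ) * (Mbound Φ * (box d ⌈r⌉₊).card) := by
                  rw [Finset.sum_const, nsmul_eq_mul]
      _ = 2 * (Mbound Φ * (box d ⌈r⌉₊).card) * ((Q \ Λ).card : ℝ) := by ring
  have hcard : ((Q \ Λ).card : ℝ) = (Q.card : ℝ) - Λ.card := by
    rw [Finset.card_sdiff_of_subset h]
    exact_mod_cast Nat.cast_sub (Finset.card_le_card h)
  calc (1 : ℝ) / 2 * |∑ p ∈ Q ×ˢ Q \ Λ ×ˢ Λ, eTerm Φ Z p.1 p.2|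
      ≤ (1 / 2) * (2 * (Mbound Φ * (box d ⌈r⌉₊).card) * ((Q \ Λ).card : ℝ)) := by
        refine mul_le_mul_of_nonneg_left key (by norm_num)
    _ = Mbound Φ * (box d ⌈r⌉₊).card * ((Q.card : ℝ) - Λ.card) := by
        rw [hcard]; ring

end Aux2

section Aux3

variable {d n : ℕ} {r : ℝ} (Φ : Potential d n r)

lemma excites_modify (X Y : Config d n) (l : ℕ) :
    Excites (fun a => if a ∈ box d l then Y a else X a) X := by
  refine Set.Finite.subset (box d l).finite_toSet fun a ha => ?_
  simp only [Set.mem_setOf_eq] at ha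
  rw [Finset.mem_coe]
  by_contra hmem
  simp [hmem] at ha

lemma relHam_eq_box (X Y' : Config d n) (l : ℕ)
    (hY' : ∀ a, a ∉ box d l → Y' a = X a) :
    relHam Φ Y' X = boxEnergy Φ (box d (l + ⌈r⌉₊)) Y' - boxEnergy Φ (box d (l + ⌈r⌉₊)) X := by
  classical
  set R := ⌈r⌉₊ with hR
  set Q := box d (l + R) with hQ
  set F : Site d × Site d → ℝ := fun p =>
    if p.1 ≠ p.2 then
      Φ.pot (p.1 - p.2) (Y' p.1) (Y' p.2) - Φ.pot (p.1 - p.2) (X p.1) (X p.2)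
    else 0 with hF
  have hmem : ∀ (a b : Site d), a ∈ box d l → a - b ∈ box d R → b ∈ Q := by
    intro a b ha hab
    rw [mem_box_iff] at ha hab ⊢
    intro i
    have h1 := ha i
    have h2 := hab i
    have h3 : (a - b) i = a i - b i := rfl
    rw [h3] at h2
    have : |b i| ≤ |a i| + |a i - b i| := by
      calc |b i| = |a i - (a i - b i)| := by ring_nf
        _ ≤ |a i| + |a i - b i| := abs_sub _ _
    push_cast
    omega
  have hsupp : Function.support F ⊆ ↑(Q ×ˢ Q) := by
    intro p hp
    rw [Function.mem_support, hF] at hp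
    simp only [ne_eq, ite_ne_right_iff] at hp
    obtain ⟨hne, hdiff⟩ := hp
    have hball : p.1 - p.2 ∈ box d R := by
      by_cases h1 : Φ.pot (p.1 - p.2) (Y' p.1) (Y' p.2) = 0
      · have h2 : Φ.pot (p.1 - p.2) (X p.1) (X p.2) ≠ 0 := fun h => hdiff (by rw [h1, h]; ring)
        exact pot_mem_ball Φ h2
      · exact pot_mem_ball Φ h1
    have hone : Y' p.1 ≠ X p.1 ∨ Y' p.2 ≠ X p.2 := by
      by_contra h
      push_neg at h
      exact hdiff (by rw [h.1, h.2]; ring)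
    have hball' : p.2 - p.1 ∈ box d R := by
      rw [mem_box_iff] at hball ⊢
      intro i
      have := hball i
      have h3 : (p.2 - p.1) i = -((p.1 - p.2) i) := by
        show p.2 i - p.1 i = -(p.1 i - p.2 i); ring
      rw [h3, abs_neg]
      exact this
    rw [Finset.coe_product, Set.mem_prod]
    rcases hone with h | h
    · have h1 : p.1 ∈ box d l := by
        by_contra hc; exact h (hY' _ hc)
      exact ⟨box_mono (Nat.le_add_right _ _) h1, hmem _ _ h1 hball⟩
    · have h2 : p.2 ∈ box d l := by
        by_contra hc; exact h (hY' _ hc)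
      refine ⟨hmem _ _ h2 hball', box_mono (Nat.le_add_right _ _) h2⟩
  have hfin : relHam Φ Y' X = (1 / 2) * ∑ p ∈ Q ×ˢ Q, F p := by
    rw [relHam]
    congr 1
    exact finsum_eq_sum_of_support_subset F hsupp
  rw [hfin, boxEnergy_eq, boxEnergy_eq, Finset.sum_product (f := F)]
  have hterm : ∀ a b : Site d, F (a, b) = eTerm Φ Y' a b - eTerm Φ X a b := by
    intro a b
    rw [hF, eTerm, eTerm]
    by_cases h : a ≠ b <;> simp [h]
  simp_rw [hterm, Finset.sum_sub_distrib]
  ring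

end Aux3

section Aux4

variable {d n : ℕ} {r : ℝ} (Φ : Potential d n r)

lemma boxEnergy_compare (X Y : Config d n) (hX : IsGroundState Φ X) (l : ℕ) :
    boxEnergy Φ (box d l) X ≤ boxEnergy Φ (box d l) Y
      + 2 * (Mbound Φ * (box d ⌈r⌉₊).card)
        * (((box d (l + ⌈r⌉₊)).card : ℝ) - (box d l).card) := by
  classical
  set Λ := box d l with hΛ
  set Q := box d (l + ⌈r⌉₊) with hQdef
  have hΛQ : Λ ⊆ Q := box_mono (Nat.le_add_right _ _)
  set Y' : Config d n := fun a => if a ∈ box d l then Y a else X a with hY'def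
  have h0 : 0 ≤ relHam Φ Y' X := hX Y' (excites_modify X Y l)
  have h1 := relHam_eq_box Φ X Y' l (fun a ha => by simp [hY'def, ha])
  have h2 : boxEnergy Φ Q X ≤ boxEnergy Φ Q Y' := by
    rw [h1] at h0; linarith
  have h3 := abs_le.1 (boxEnergy_diff_le Φ hΛQ X)
  have h4 := abs_le.1 (boxEnergy_diff_le Φ hΛQ Y')
  have h5 : boxEnergy Φ Λ Y' = boxEnergy Φ Λ Y :=
    boxEnergy_congr Φ (fun a ha => by simp [hY'def, hΛ ▸ ha])
  have hE : 2 * (Mbound Φ * ((box d ⌈r⌉₊).card : ℝ)) * ((Q.card : ℝ) - Λ.card)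
      = 2 * (Mbound Φ * ((box d ⌈r⌉₊).card : ℝ) * ((Q.card : ℝ) - Λ.card)) := by ring
  rw [hE]
  linarith [h3.1, h3.2, h4.1, h4.2]

lemma tendsto_boundary (R : ℕ) :
    Filter.Tendsto (fun l : ℕ => ((2 * ((l : ℝ) + R) + 1) / (2 * l + 1)) ^ d - 1)
      Filter.atTop (nhds 0) := by
  have h1 : Filter.Tendsto (fun l : ℕ => (2 * (l : ℝ) + 1)) Filter.atTop Filter.atTop := by
    apply Filter.tendsto_atTop_add_const_right
    exact Filter.Tendsto.const_mul_atTop (by norm_num) tendsto_natCast_atTop_atTop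
  have h2 : Filter.Tendsto (fun l : ℕ => (2 * (R : ℝ)) / (2 * l + 1))
      Filter.atTop (nhds 0) := Filter.Tendsto.div_atTop tendsto_const_nhds h1
  have h3 : Filter.Tendsto (fun l : ℕ => (2 * ((l : ℝ) + R) + 1) / (2 * l + 1))
      Filter.atTop (nhds 1) := by
    have heq : ∀ l : ℕ, (2 * ((l : ℝ) + R) + 1) / (2 * l + 1)
        = 1 + (2 * (R : ℝ)) / (2 * l + 1) := by
      intro l
      have hne : (2 * (l : ℝ) + 1) ≠ 0 := by positivity
      field_simp
      ring
    simp_rw [heq]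
    have := Filter.Tendsto.const_add (1 : ℝ) h2
    simpa using this
  have h4 := Filter.Tendsto.pow h3 d
  have h5 := Filter.Tendsto.sub_const h4 1
  simpa using h5

lemma liminf_le_liminf_aux {f g h : ℕ → ℝ} {B : ℝ}
    (hfB : ∀ l, |f l| ≤ B) (hgB : ∀ l, |g l| ≤ B)
    (hle : ∀ l, f l ≤ g l + h l) (hh : Filter.Tendsto h Filter.atTop (nhds 0)) :
    Filter.liminf f Filter.atTop ≤ Filter.liminf g Filter.atTop := by
  refine le_of_forall_pos_le_add fun ε hε => ?_
  have hg_cb : Filter.IsCoboundedUnder (· ≥ ·) Filter.atTop g :=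
    (Filter.isBoundedUnder_of ⟨B, fun l => (abs_le.1 (hgB l)).2⟩).isCoboundedUnder_ge
  rw [Filter.liminf_eq]
  apply csSup_le
  · exact ⟨-B, Filter.Eventually.of_forall fun l => (abs_le.1 (hfB l)).1⟩
  · intro a ha
    have hev : ∀ᶠ l in Filter.atTop, h l ≤ ε := hh.eventually (eventually_le_nhds hε)
    have hev2 : ∀ᶠ l in Filter.atTop, a - ε ≤ g l := by
      filter_upwards [ha, hev] with l h1 h2
      have := hle l
      linarith
    have := Filter.le_liminf_of_le hg_cb hev2
    linarith

end Aux4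

/-- A ground-state configuration of a finite-range two-body
translation-invariant potential has minimal energy density. -/
theorem groundState_minimal_energyDensity
    {d n : ℕ} (hd : 1 ≤ d) (hn : 1 ≤ n) {r : ℝ} (hr : 0 < r)
    (Φ : Potential d n r) (X : Config d n) (hX : IsGroundState Φ X) :
    ∀ Y : Config d n, energyDensity Φ X ≤ energyDensity Φ Y := by
  intro Y
  classical
  set R : ℕ := ⌈r⌉₊ with hRdef
  set MB : ℝ := Mbound Φ * ((box d R).card : ℝ) with hMBdef
  have hMBnn : 0 ≤ MB := mul_nonneg (Mbound_nonneg Φ) (Nat.cast_nonneg _)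
  have hcard_pos : ∀ l : ℕ, (0 : ℝ) < ((box d l).card : ℝ) := by
    intro l
    rw [card_box]
    positivity
  -- the three sequences
  set f : ℕ → ℝ := fun l => boxEnergy Φ (box d l) X / ((box d l).card : ℝ) with hfdef
  set g : ℕ → ℝ := fun l => boxEnergy Φ (box d l) Y / ((box d l).card : ℝ) with hgdef
  set h : ℕ → ℝ := fun l =>
    2 * MB * ((((box d (l + R)).card : ℝ) - ((box d l).card : ℝ)) / ((box d l).card : ℝ))
    with hhdef
  -- pointwise comparison
  have hle : ∀ l, f l ≤ g l + h l := by
    intro l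
    have hcmp := boxEnergy_compare Φ X Y hX l
    have hc := hcard_pos l
    have h1 : f l ≤ (boxEnergy Φ (box d l) Y
        + 2 * (Mbound Φ * ((box d ⌈r⌉₊).card : ℝ))
          * (((box d (l + ⌈r⌉₊)).card : ℝ) - ((box d l).card : ℝ))) / ((box d l).card : ℝ) := by
      simp only [hfdef]
      gcongr
    refine le_trans h1 (le_of_eq ?_)
    rw [hgdef, hhdef, hMBdef, hRdef]
    field_simp
  -- uniform bounds
  have hbd : ∀ (Z : Config d n) (l : ℕ),
      |boxEnergy Φ (box d l) Z / ((box d l).card : ℝ)| ≤ MB / 2 := by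
    intro Z l
    have hc := hcard_pos l
    rw [abs_div, abs_of_pos hc, div_le_iff₀ hc]
    refine le_trans (abs_boxEnergy_le Φ (box d l) Z) (le_of_eq ?_)
    rw [hMBdef, hRdef]
    ring
  have hfB : ∀ l, |f l| ≤ MB / 2 := fun l => hbd X l
  have hgB : ∀ l, |g l| ≤ MB / 2 := fun l => hbd Y l
  -- the boundary term tends to zero
  have hhtend : Filter.Tendsto h Filter.atTop (nhds 0) := by
    have heq : ∀ l : ℕ,
        ((((box d (l + R)).card : ℝ) - ((box d l).card : ℝ)) / ((box d l).card : ℝ))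
          = ((2 * ((l : ℝ) + R) + 1) / (2 * (l : ℝ) + 1)) ^ d - 1 := by
      intro l
      rw [card_box, card_box, div_pow]
      push_cast
      rw [sub_div, div_self (by positivity)]
    have hfun : h = fun l : ℕ =>
        2 * MB * (((2 * ((l : ℝ) + R) + 1) / (2 * (l : ℝ) + 1)) ^ d - 1) := by
      funext l
      simp only [hhdef]
      rw [heq l]
    rw [hfun]
    have := (tendsto_boundary (d := d) R).const_mul (2 * MB)
    simpa using this
  rw [energyDensity, energyDensity]
  exact liminf_le_liminf_aux hfB hgB hle hhtend

end QC
end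

section
/- Boundary estimate: let Φ be a two-body translation-invariant potential of range r on Ω = (ℤ^d → Fin n), and let M = sup over nonzero c and particle types s,t of |Φ_c(s,t)|. There is a constant K, depending only on d, r and M (and not on N or the configurations), with the following property: for any configurations X, Y and any N ≥ 1, the configuration Z defined by Z = Y on the cube Sq(N) = {1,…,N}^d and Z = X outside Sq(N) is a local excitation of X and satisfies |H(Z,X) − (H_{Sq(N)}(Y) − H_{Sq(N)}(X))| ≤ K·N^{d−1}. -/
open Filter MeasureTheory

namespace QC

variable {d n : ℕ} {r : ℝ}

/-- The cube `Sq(N) = {1,…,N}^d`. -/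
noncomputable def sq (d N : ℕ) : Finset (Site d) :=
  Fintype.piFinset fun _ => Finset.Icc (1 : ℤ) (N : ℤ)

/-- Boundary estimate: there is a constant `K`, depending only on `d`, `r`
and `M`, such that for any `Φ` of range `r` bounded by `M`, any configurations `X, Y` and
any `N ≥ 1`, the configuration `Z` obtained by pasting `Y` on `Sq(N)` into `X` is a local
excitation of `X` and `|H(Z,X) − (H_{Sq(N)}(Y) − H_{Sq(N)}(X))| ≤ K·N^(d−1)`. -/
theorem boundary_estimate (d : ℕ) (hd : 1 ≤ d) (r M : ℝ) (hr : 0 < r) :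
    ∃ K : ℝ, ∀ (n : ℕ), 1 ≤ n → ∀ Φ : Potential d n r,
      (∀ c s t, |Φ.pot c s t| ≤ M) →
      ∀ (X Y : Config d n) (N : ℕ), 1 ≤ N →
        Excites (fun a => if a ∈ sq d N then Y a else X a) X ∧
        |relHam Φ (fun a => if a ∈ sq d N then Y a else X a) X
            - (boxEnergy Φ (sq d N) Y - boxEnergy Φ (sq d N) X)|
          ≤ K * (N : ℝ) ^ (d - 1) := by
  classical
  set R : ℕ := ⌈r⌉₊ with hRdef
  set C : ℕ := 4 * d * R * (2 * R + 1) ^ d with hCdef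
  refine ⟨M * C, ?_⟩
  intro n hn Φ hM X Y N hN
  have hM0 : 0 ≤ M := le_trans (abs_nonneg _) (hM 0 ⟨0, hn⟩ ⟨0, hn⟩)
  have hrR : r ≤ (R : ℝ) := Nat.le_ceil r
  set Λ : Finset (Site d) := sq d N with hΛdef
  set Z : Config d n := fun a => if a ∈ sq d N then Y a else X a with hZdef
  set T : Finset (Site d) :=
    Fintype.piFinset fun _ : Fin d => Finset.Icc (1 - (R : ℤ)) ((N : ℤ) + R) with hTdef
  have hmemΛ : ∀ a : Site d, a ∈ Λ ↔ ∀ i, 1 ≤ a i ∧ a i ≤ (N : ℤ) := by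
    intro a; simp [hΛdef, sq, Fintype.mem_piFinset, Finset.mem_Icc]
  have hmemT : ∀ a : Site d, a ∈ T ↔ ∀ i, 1 - (R : ℤ) ≤ a i ∧ a i ≤ (N : ℤ) + R := by
    intro a; simp [hTdef, Fintype.mem_piFinset, Finset.mem_Icc]
  have hΛT : Λ ⊆ T := by
    intro a ha
    rw [hmemΛ] at ha; rw [hmemT]
    intro i
    have := ha i
    have hR0 : (0 : ℤ) ≤ R := Int.ofNat_nonneg R
    omega
  have hZoff : ∀ a : Site d, Z a ≠ X a → a ∈ Λ := by
    intro a ha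
    by_contra h
    exact ha (by simp [hZdef, hΛdef] at h ⊢; intro hy; exact absurd hy h)
  have hZon : ∀ a ∈ Λ, Z a = Y a := by
    intro a ha; simp only [hZdef]; rw [if_pos ha]
  -- coordinate bound from the finite range
  have hcoord : ∀ a b : Site d,
      (∀ s t, Φ.pot (a - b) s t = 0) ∨ ∀ i, |a i - b i| ≤ (R : ℤ) := by
    intro a b
    by_cases h : r < ‖a - b‖
    · exact Or.inl (Φ.finite_range _ h)
    · right
      intro i
      push_neg at h
      have h1 : ‖(a - b) i‖ ≤ ‖a - b‖ := norm_le_pi_norm (a - b) i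
      have h2 : |((a i - b i : ℤ) : ℝ)| ≤ (R : ℝ) := by
        have : (a - b) i = a i - b i := rfl
        rw [this] at h1
        calc |((a i - b i : ℤ) : ℝ)| = ‖(a i - b i : ℤ)‖ := (Int.norm_eq_abs _).symm
          _ ≤ r := le_trans h1 h
          _ ≤ (R : ℝ) := hrR
      exact_mod_cast h2
  set f : Site d × Site d → ℝ := fun p =>
    if p.1 ≠ p.2 then
      Φ.pot (p.1 - p.2) (Z p.1) (Z p.2) - Φ.pot (p.1 - p.2) (X p.1) (X p.2)
    else 0 with hfdef
  have hfP : ∀ p : Site d × Site d, f p ≠ 0 →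
      (p.1 ∈ Λ ∨ p.2 ∈ Λ) ∧ ∀ i, |p.1 i - p.2 i| ≤ (R : ℤ) := by
    intro p hp
    simp only [hfdef] at hp
    by_cases hne : p.1 ≠ p.2
    · rw [if_pos hne] at hp
      constructor
      · by_contra hc
        push_neg at hc
        have h1 : Z p.1 = X p.1 := by
          by_contra h; exact hc.1 (hZoff _ h)
        have h2 : Z p.2 = X p.2 := by
          by_contra h; exact hc.2 (hZoff _ h)
        rw [h1, h2, sub_self] at hp
        exact hp rfl
      · rcases hcoord p.1 p.2 with h | h
        · rw [h, h, sub_self] at hp; exact absurd rfl hp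
        · exact h
    · rw [if_neg hne] at hp; exact absurd rfl hp
  have hsupp : Function.support f ⊆ ↑(T ×ˢ T) := by
    intro p hp
    obtain ⟨hin, hab⟩ := hfP p hp
    have key : ∀ a b : Site d, a ∈ Λ → (∀ i, |a i - b i| ≤ (R : ℤ)) → b ∈ T := by
      intro a b ha hb
      rw [hmemΛ] at ha; rw [hmemT]
      intro i
      have h1 := ha i
      have h2 := hb i
      rw [abs_le] at h2
      omega
    have hab' : ∀ i, |p.2 i - p.1 i| ≤ (R : ℤ) := by
      intro i; rw [abs_sub_comm]; exact hab i
    rcases hin with h | h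
    · exact Finset.mem_product.2 ⟨hΛT h, key _ _ h hab⟩
    · exact Finset.mem_product.2 ⟨key _ _ h hab', hΛT h⟩
  have hrel : relHam Φ Z X = (1 / 2) * ∑ p ∈ T ×ˢ T, f p := by
    rw [relHam]
    congr 1
    exact finsum_eq_sum_of_support_subset _ hsupp
  have hbox : boxEnergy Φ Λ Y - boxEnergy Φ Λ X = (1 / 2) * ∑ p ∈ Λ ×ˢ Λ, f p := by
    rw [boxEnergy, boxEnergy, ← mul_sub, ← Finset.sum_sub_distrib]
    congr 1
    rw [Finset.sum_product]
    refine Finset.sum_congr rfl fun a ha => ?_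
    rw [← Finset.sum_sub_distrib]
    refine Finset.sum_congr rfl fun b hb => ?_
    simp only [hfdef]
    rw [hZon a ha, hZon b hb]
    split_ifs <;> simp
  have hsub : Λ ×ˢ Λ ⊆ T ×ˢ T := Finset.product_subset_product hΛT hΛT
  set S : Finset (Site d × Site d) := (T ×ˢ T) \ (Λ ×ˢ Λ) with hSdef
  have hdiff : relHam Φ Z X - (boxEnergy Φ Λ Y - boxEnergy Φ Λ X)
      = (1 / 2) * ∑ p ∈ S, f p := by
    rw [hrel, hbox, ← mul_sub, hSdef, Finset.sum_sdiff_eq_sub hsub]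
  -- the filter predicate
  set P : Site d × Site d → Prop := fun p =>
    ((p.1 ∈ Λ ∧ p.2 ∉ Λ) ∨ (p.2 ∈ Λ ∧ p.1 ∉ Λ)) ∧
      ∀ i, |p.1 i - p.2 i| ≤ (R : ℤ) with hPdef
  have hPS : ∀ p ∈ S, |f p| ≠ 0 → P p := by
    intro p hp hfp
    have hf : f p ≠ 0 := fun h => hfp (by rw [h, abs_zero])
    obtain ⟨hin, hab⟩ := hfP p hf
    have hnot : ¬(p.1 ∈ Λ ∧ p.2 ∈ Λ) := by
      intro h
      rw [hSdef, Finset.mem_sdiff] at hp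
      exact hp.2 (Finset.mem_product.2 h)
    refine ⟨?_, hab⟩
    tauto
  have hsum_filter : ∑ p ∈ S, |f p| = ∑ p ∈ S.filter P, |f p| :=
    (Finset.sum_filter_of_ne hPS).symm
  -- bound each term by 2M
  have hterm : ∀ p ∈ S.filter P, |f p| ≤ 2 * M := by
    intro p _
    simp only [hfdef]
    split_ifs
    · calc |Φ.pot (p.1 - p.2) (Z p.1) (Z p.2) - Φ.pot (p.1 - p.2) (X p.1) (X p.2)|
          ≤ |Φ.pot (p.1 - p.2) (Z p.1) (Z p.2)| + |Φ.pot (p.1 - p.2) (X p.1) (X p.2)| :=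
            abs_sub _ _
        _ ≤ M + M := add_le_add (hM _ _ _) (hM _ _ _)
        _ = 2 * M := by ring
    · rw [abs_zero]; linarith
  -- counting
  set A : Finset (Site d) :=
    Λ.filter (fun a => ∃ i, a i ≤ (R : ℤ) ∨ (N : ℤ) + 1 - R ≤ a i) with hAdef
  set Ball : Finset (Site d) :=
    Fintype.piFinset fun _ : Fin d => Finset.Icc (-(R : ℤ)) (R : ℤ) with hBalldef
  have hBallcard : Ball.card = (2 * R + 1) ^ d := by
    rw [hBalldef, Fintype.card_piFinset]
    have : (Finset.Icc (-(R : ℤ)) (R : ℤ)).card = 2 * R + 1 := by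
      rw [Int.card_Icc]
      omega
    simp [this]
  have hAcard : A.card ≤ d * (2 * R) * N ^ (d - 1) := by
    have hsub2 : A ⊆ Finset.univ.biUnion
        (fun i : Fin d => Λ.filter fun a => a i ≤ (R : ℤ) ∨ (N : ℤ) + 1 - R ≤ a i) := by
      intro a ha
      rw [hAdef, Finset.mem_filter] at ha
      obtain ⟨h1, i, h2⟩ := ha
      exact Finset.mem_biUnion.2 ⟨i, Finset.mem_univ i, Finset.mem_filter.2 ⟨h1, h2⟩⟩
    calc A.card ≤ _ := Finset.card_le_card hsub2
      _ ≤ ∑ i : Fin d, (Λ.filter fun a => a i ≤ (R : ℤ) ∨ (N : ℤ) + 1 - R ≤ a i).card :=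
          Finset.card_biUnion_le
      _ ≤ ∑ _i : Fin d, 2 * R * N ^ (d - 1) := by
          refine Finset.sum_le_sum fun i _ => ?_
          set bad : Finset ℤ :=
            (Finset.Icc (1 : ℤ) (N : ℤ)).filter
              (fun x => x ≤ (R : ℤ) ∨ (N : ℤ) + 1 - R ≤ x) with hbaddef
          have hsub3 : (Λ.filter fun a => a i ≤ (R : ℤ) ∨ (N : ℤ) + 1 - R ≤ a i)
              ⊆ Fintype.piFinset (fun j : Fin d =>
                  if j = i then bad else Finset.Icc (1 : ℤ) (N : ℤ)) := by
            intro a ha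
            rw [Finset.mem_filter] at ha
            obtain ⟨h1, h2⟩ := ha
            rw [hmemΛ] at h1
            rw [Fintype.mem_piFinset]
            intro j
            by_cases hj : j = i
            · subst hj
              rw [if_pos rfl, hbaddef, Finset.mem_filter, Finset.mem_Icc]
              exact ⟨⟨(h1 j).1, (h1 j).2⟩, h2⟩
            · rw [if_neg hj, Finset.mem_Icc]
              exact ⟨(h1 j).1, (h1 j).2⟩
          have hbadcard : bad.card ≤ 2 * R := by
            have : bad ⊆ Finset.Icc (1 : ℤ) (R : ℤ) ∪
                Finset.Icc ((N : ℤ) + 1 - R) (N : ℤ) := by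
              intro x hx
              rw [hbaddef, Finset.mem_filter, Finset.mem_Icc] at hx
              rw [Finset.mem_union, Finset.mem_Icc, Finset.mem_Icc]
              omega
            calc bad.card ≤ _ := Finset.card_le_card this
              _ ≤ (Finset.Icc (1 : ℤ) (R : ℤ)).card
                  + (Finset.Icc ((N : ℤ) + 1 - R) (N : ℤ)).card := Finset.card_union_le _ _
              _ ≤ 2 * R := by
                  rw [Int.card_Icc, Int.card_Icc]
                  omega
          calc (Λ.filter fun a => a i ≤ (R : ℤ) ∨ (N : ℤ) + 1 - R ≤ a i).card
              ≤ _ := Finset.card_le_card hsub3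
            _ = ∏ j : Fin d,
                (if j = i then bad else Finset.Icc (1 : ℤ) (N : ℤ)).card := by
                rw [Fintype.card_piFinset]
            _ ≤ 2 * R * N ^ (d - 1) := by
                rw [← Finset.mul_prod_erase Finset.univ _ (Finset.mem_univ i)]
                have h2 : ∀ j ∈ Finset.univ.erase i,
                    (if j = i then bad else Finset.Icc (1 : ℤ) (N : ℤ)).card = N := by
                  intro j hj
                  rw [if_neg (Finset.mem_erase.1 hj).1, Int.card_Icc]
                  omega
                rw [Finset.prod_congr rfl h2, Finset.prod_const, if_pos rfl]
                have : (Finset.univ.erase i).card = d - 1 := by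
                  rw [Finset.card_erase_of_mem (Finset.mem_univ i), Finset.card_univ,
                    Fintype.card_fin]
                rw [this]
                exact Nat.mul_le_mul_right _ hbadcard
      _ = d * (2 * R) * N ^ (d - 1) := by
          rw [Finset.sum_const, Finset.card_univ, Fintype.card_fin, smul_eq_mul]; ring
  -- injections
  have hinj : ∀ (g : Site d × Site d → Site d × Site d),
      (g = fun p => (p.1, p.2 - p.1)) ∨ (g = fun p => (p.2, p.1 - p.2)) → True := fun _ _ => trivial
  set F₁ : Finset (Site d × Site d) := (T ×ˢ T).filter
    (fun p => p.1 ∈ Λ ∧ p.2 ∉ Λ ∧ ∀ i, |p.1 i - p.2 i| ≤ (R : ℤ)) with hF₁def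
  set F₂ : Finset (Site d × Site d) := (T ×ˢ T).filter
    (fun p => p.2 ∈ Λ ∧ p.1 ∉ Λ ∧ ∀ i, |p.1 i - p.2 i| ≤ (R : ℤ)) with hF₂def
  have hfilter_sub : S.filter P ⊆ F₁ ∪ F₂ := by
    intro p hp
    rw [Finset.mem_filter] at hp
    obtain ⟨hpS, hdisj, hab⟩ := hp
    have hpT : p ∈ T ×ˢ T := (Finset.sdiff_subset) hpS
    rw [Finset.mem_union, hF₁def, hF₂def, Finset.mem_filter, Finset.mem_filter]
    rcases hdisj with h | h
    · exact Or.inl ⟨hpT, h.1, h.2, hab⟩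
    · exact Or.inr ⟨hpT, h.1, h.2, hab⟩
  have hboundary : ∀ (a b : Site d), a ∈ Λ → b ∉ Λ →
      (∀ i, |a i - b i| ≤ (R : ℤ)) → a ∈ A := by
    intro a b ha hb hab
    rw [hAdef, Finset.mem_filter]
    refine ⟨ha, ?_⟩
    rw [hmemΛ] at ha hb
    push_neg at hb
    obtain ⟨i, hi⟩ := hb
    refine ⟨i, ?_⟩
    have h1 := ha i
    have h2 := hab i
    rw [abs_le] at h2
    by_cases hc : 1 ≤ b i
    · have := hi hc
      omega
    · omega
  have hball_mem : ∀ (a b : Site d), (∀ i, |a i - b i| ≤ (R : ℤ)) → b - a ∈ Ball := by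
    intro a b hab
    rw [hBalldef, Fintype.mem_piFinset]
    intro i
    rw [Finset.mem_Icc]
    have := hab i
    rw [abs_le] at this
    have : -(R : ℤ) ≤ b i - a i ∧ b i - a i ≤ R := by omega
    exact ⟨this.1, this.2⟩
  have hF₁card : F₁.card ≤ A.card * (2 * R + 1) ^ d := by
    rw [← hBallcard, ← Finset.card_product]
    refine Finset.card_le_card_of_injOn (fun p => (p.1, p.2 - p.1)) ?_ ?_
    · intro p hp
      rw [hF₁def, Finset.mem_coe, Finset.mem_filter] at hp
      obtain ⟨_, h1, h2, h3⟩ := hp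
      exact Finset.mem_product.2 ⟨hboundary _ _ h1 h2 h3, hball_mem _ _ h3⟩
    · intro p _ q _ h
      simp only [Prod.mk.injEq] at h
      obtain ⟨h1, h2⟩ := h
      have : p.2 = q.2 := by
        have := sub_eq_sub_iff_sub_eq_sub.1 h2
        rw [h1] at h2
        exact sub_left_injective h2
      exact Prod.ext h1 this
  have hF₂card : F₂.card ≤ A.card * (2 * R + 1) ^ d := by
    rw [← hBallcard, ← Finset.card_product]
    refine Finset.card_le_card_of_injOn (fun p => (p.2, p.1 - p.2)) ?_ ?_
    · intro p hp
      rw [hF₂def, Finset.mem_coe, Finset.mem_filter] at hp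
      obtain ⟨_, h1, h2, h3⟩ := hp
      have h3' : ∀ i, |p.2 i - p.1 i| ≤ (R : ℤ) := fun i => by
        rw [abs_sub_comm]; exact h3 i
      exact Finset.mem_product.2 ⟨hboundary _ _ h1 h2 h3', hball_mem _ _ h3'⟩
    · intro p _ q _ h
      simp only [Prod.mk.injEq] at h
      obtain ⟨h1, h2⟩ := h
      have : p.1 = q.1 := by
        rw [h1] at h2
        exact sub_left_injective h2
      exact Prod.ext this h1
  have hcount : (S.filter P).card ≤ C * N ^ (d - 1) := by
    calc (S.filter P).card ≤ (F₁ ∪ F₂).card := Finset.card_le_card hfilter_sub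
      _ ≤ F₁.card + F₂.card := Finset.card_union_le _ _
      _ ≤ A.card * (2 * R + 1) ^ d + A.card * (2 * R + 1) ^ d := add_le_add hF₁card hF₂card
      _ ≤ (d * (2 * R) * N ^ (d - 1)) * (2 * R + 1) ^ d
          + (d * (2 * R) * N ^ (d - 1)) * (2 * R + 1) ^ d :=
          add_le_add (Nat.mul_le_mul_right _ hAcard) (Nat.mul_le_mul_right _ hAcard)
      _ = C * N ^ (d - 1) := by rw [hCdef]; ring
  -- conclude
  constructor
  · refine Set.Finite.subset Λ.finite_toSet ?_
    intro a ha
    exact hZoff a ha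
  · rw [hdiff]
    have h1 : |(1 / 2 : ℝ) * ∑ p ∈ S, f p| ≤ (1 / 2) * ((S.filter P).card * (2 * M)) := by
      rw [abs_mul]
      have : |(1 / 2 : ℝ)| = 1 / 2 := by norm_num
      rw [this]
      refine mul_le_mul_of_nonneg_left ?_ (by norm_num)
      calc |∑ p ∈ S, f p| ≤ ∑ p ∈ S, |f p| := Finset.abs_sum_le_sum_abs _ _
        _ = ∑ p ∈ S.filter P, |f p| := hsum_filter
        _ ≤ (S.filter P).card * (2 * M) := by
            have := Finset.sum_le_card_nsmul (S.filter P) (fun p => |f p|) (2 * M) hterm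
            rwa [nsmul_eq_mul] at this
    refine le_trans h1 ?_
    have h2 : ((S.filter P).card : ℝ) ≤ (C : ℝ) * (N : ℝ) ^ (d - 1) := by
      have := hcount
      exact_mod_cast this
    calc (1 / 2 : ℝ) * ((S.filter P).card * (2 * M))
        = M * ((S.filter P).card : ℝ) := by ring
      _ ≤ M * ((C : ℝ) * (N : ℝ) ^ (d - 1)) := mul_le_mul_of_nonneg_left h2 hM0
      _ = M * (C : ℝ) * (N : ℝ) ^ (d - 1) := by ring

end QC
end

section
/- For every two-body translation-invariant potential Φ of range r on Ω = (ℤ^d → Fin n), the set of ground-state configurations of Φ is nonempty. -/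
open Filter MeasureTheory

namespace QC

variable {d n : ℕ} {r : ℝ}

/-- The ball of radius `r` in `ℤ^d` as a finset. -/
noncomputable def ballK (d : ℕ) (r : ℝ) : Finset (Site d) :=
  Fintype.piFinset fun _ => Finset.Icc (-(⌈r⌉ : ℤ)) ⌈r⌉

lemma mem_ballK {c : Site d} (h : ‖c‖ ≤ r) : c ∈ ballK d r := by
  rw [ballK, Fintype.mem_piFinset]
  intro i
  have h1 : ‖c i‖ ≤ r := le_trans (norm_le_pi_norm c i) h
  rw [Int.norm_eq_abs] at h1
  have h2 : |(c i : ℝ)| ≤ (⌈r⌉ : ℝ) := le_trans h1 (Int.le_ceil r)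
  rw [← Int.cast_abs, Int.cast_le] at h2
  rw [Finset.mem_Icc]
  exact abs_le.mp h2

noncomputable def nbhd (r : ℝ) (Λ : Finset (Site d)) : Finset (Site d) :=
  Λ ∪ Finset.image₂ (· + ·) Λ (ballK d r)

lemma subset_nbhd (Λ : Finset (Site d)) : Λ ⊆ nbhd r Λ := Finset.subset_union_left

lemma mem_nbhd_of_close {Λ : Finset (Site d)} {a b : Site d} (ha : a ∈ Λ)
    (h : ‖b - a‖ ≤ r) : b ∈ nbhd r Λ := by
  refine Finset.mem_union_right _ ?_
  rw [Finset.mem_image₂]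
  exact ⟨a, ha, b - a, mem_ballK h, by ring⟩

noncomputable def pairFinset (r : ℝ) (Λ : Finset (Site d)) : Finset (Site d × Site d) :=
  (Λ ×ˢ nbhd r Λ) ∪ (nbhd r Λ ×ˢ Λ)

noncomputable def locEnergy (Φ : Potential d n r) (Λ : Finset (Site d)) (W : Config d n) : ℝ :=
  (1 / 2) * ∑ p ∈ pairFinset r Λ,
    (if p.1 ≠ p.2 then Φ.pot (p.1 - p.2) (W p.1) (W p.2) else 0)

lemma locEnergy_congr {Φ : Potential d n r} {Λ : Finset (Site d)} {W W' : Config d n}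
    (h : ∀ a ∈ nbhd r Λ, W a = W' a) : locEnergy Φ Λ W = locEnergy Φ Λ W' := by
  unfold locEnergy
  congr 1
  refine Finset.sum_congr rfl fun p hp => ?_
  have hmem : p.1 ∈ nbhd r Λ ∧ p.2 ∈ nbhd r Λ := by
    rcases Finset.mem_union.mp hp with h' | h' <;> rw [Finset.mem_product] at h'
    · exact ⟨subset_nbhd Λ h'.1, h'.2⟩
    · exact ⟨h'.1, subset_nbhd Λ h'.2⟩
  rw [h p.1 hmem.1, h p.2 hmem.2]

lemma relHam_eq_locEnergy_sub {Φ : Potential d n r} {Λ : Finset (Site d)} {Y X : Config d n}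
    (h : ∀ a, a ∉ Λ → Y a = X a) :
    relHam Φ Y X = locEnergy Φ Λ Y - locEnergy Φ Λ X := by
  unfold relHam locEnergy
  rw [finsum_eq_sum_of_support_subset _ (s := pairFinset r Λ) ?sub]
  case sub =>
    intro p hp
    simp only [Function.mem_support] at hp
    have hne : p.1 ≠ p.2 := by intro he; simp [he] at hp
    rw [if_pos hne] at hp
    have hrange : ‖p.1 - p.2‖ ≤ r := by
      by_contra hcon
      push_neg at hcon
      rw [Φ.finite_range _ hcon, Φ.finite_range _ hcon, sub_self] at hp
      exact hp rfl
    have hΛ : p.1 ∈ Λ ∨ p.2 ∈ Λ := by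
      by_contra hcon
      push_neg at hcon
      rw [h p.1 hcon.1, h p.2 hcon.2, sub_self] at hp
      exact hp rfl
    rcases hΛ with h1 | h2
    · refine Finset.mem_coe.mpr (Finset.mem_union_left _ ?_)
      rw [Finset.mem_product]
      refine ⟨h1, mem_nbhd_of_close h1 ?_⟩
      rwa [← norm_sub_rev] at hrange
      -- ‖p.2 - p.1‖ = ‖p.1 - p.2‖
    · refine Finset.mem_coe.mpr (Finset.mem_union_right _ ?_)
      rw [Finset.mem_product]
      refine ⟨mem_nbhd_of_close h2 hrange, h2⟩
  rw [← mul_sub]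
  congr 1
  rw [← Finset.sum_sub_distrib]
  refine Finset.sum_congr rfl fun p _ => ?_
  split <;> simp

/-- The set of configurations that are energy-minimizing with respect to changes inside `Λ`. -/
def GS (Φ : Potential d n r) (Λ : Finset (Site d)) : Set (Config d n) :=
  {X | ∀ Y : Config d n, (∀ a, a ∉ Λ → Y a = X a) → 0 ≤ relHam Φ Y X}

lemma GS_antitone {Φ : Potential d n r} {Λ Λ' : Finset (Site d)} (h : Λ ⊆ Λ') :
    GS Φ Λ' ⊆ GS Φ Λ := by
  intro X hX Y hY
  exact hX Y fun a ha => hY a fun hin => ha (h hin)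

def extendIn (z : Fin n) (Λ : Finset (Site d)) (g : ↥Λ → Fin n) : Config d n :=
  fun a => if h : a ∈ Λ then g ⟨a, h⟩ else z

lemma GS_nonempty (hn : 1 ≤ n) (Φ : Potential d n r) (Λ : Finset (Site d)) :
    (GS Φ Λ).Nonempty := by
  set z : Fin n := ⟨0, hn⟩ with hz
  set ext : (↥Λ → Fin n) → Config d n := extendIn z Λ with hext
  have : Nonempty (↥Λ → Fin n) := ⟨fun _ => z⟩
  obtain ⟨g₀, hmin⟩ := Finite.exists_min (α := ↥Λ → Fin n) (β := ℝ)
    (fun g => locEnergy Φ Λ (ext g))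
  refine ⟨ext g₀, fun Y hY => ?_⟩
  have hYe : Y = ext (fun a => Y a) := by
    funext a
    by_cases h : a ∈ Λ
    · simp [hext, extendIn, h]
    · simp [hext, extendIn, h, hY a h]
  rw [relHam_eq_locEnergy_sub hY, sub_nonneg, hYe]
  exact hmin _

lemma GS_mem_of_agree {Φ : Potential d n r} {Λ : Finset (Site d)} {X X' : Config d n}
    (hX : X ∈ GS Φ Λ) (h : ∀ a ∈ nbhd r Λ, X' a = X a) : X' ∈ GS Φ Λ := by
  intro Y' hY'
  set Y : Config d n := fun a => if a ∈ Λ then Y' a else X a with hYdef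
  have hY : ∀ a, a ∉ Λ → Y a = X a := fun a ha => by simp [hYdef, ha]
  have h1 : relHam Φ Y' X' = locEnergy Φ Λ Y' - locEnergy Φ Λ X' :=
    relHam_eq_locEnergy_sub hY'
  have h2 : relHam Φ Y X = locEnergy Φ Λ Y - locEnergy Φ Λ X :=
    relHam_eq_locEnergy_sub hY
  have hXX : locEnergy Φ Λ X' = locEnergy Φ Λ X := locEnergy_congr h
  have hYY : locEnergy Φ Λ Y' = locEnergy Φ Λ Y := by
    refine locEnergy_congr fun a ha => ?_
    by_cases hm : a ∈ Λ
    · simp [hYdef, hm]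
    · rw [hY' a hm, h a ha, hY a hm]
  have := hX Y hY
  rw [h1, hXX, hYY, ← h2]
  exact this

lemma GS_isClosed (Φ : Potential d n r) (Λ : Finset (Site d)) :
    IsClosed (GS Φ Λ) := by
  set T := nbhd r Λ with hT
  set ρ : Config d n → (↥T → Fin n) := fun X t => X t with hρ
  have hcont : Continuous ρ := continuous_pi fun t => continuous_apply _
  have hkey : GS Φ Λ = ρ ⁻¹' (ρ '' GS Φ Λ) := by
    apply Set.Subset.antisymm (Set.subset_preimage_image _ _)
    rintro X' ⟨X, hX, hρeq⟩
    refine GS_mem_of_agree hX fun a ha => ?_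
    have := congrFun hρeq ⟨a, ha⟩
    exact this.symm
  rw [hkey]
  exact (isClosed_discrete _).preimage hcont

/-- For every two-body translation-invariant finite-range potential, the
set of ground-state configurations is nonempty. -/
theorem groundStates_nonempty
    {d n : ℕ} (hd : 1 ≤ d) (hn : 1 ≤ n) {r : ℝ} (hr : 0 < r) (Φ : Potential d n r) :
    ∃ X : Config d n, IsGroundState Φ X := by
  have : Nonempty (Fin n) := ⟨⟨0, hn⟩⟩
  set V : ℕ → Set (Config d n) := fun l => GS Φ (box d l) with hV
  have hbox : ∀ l l' : ℕ, l ≤ l' → box d l ⊆ box d l' := by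
    intro l l' h
    refine Fintype.piFinset_subset _ _ fun i => ?_
    exact Finset.Icc_subset_Icc (by exact_mod_cast neg_le_neg (Int.ofNat_le.mpr h))
      (by exact_mod_cast h)
  have hdec : ∀ i, V (i + 1) ⊆ V i := fun i => GS_antitone (hbox i (i+1) (Nat.le_succ i))
  have hne : ∀ i, (V i).Nonempty := fun i => GS_nonempty hn Φ _
  have hcl : ∀ i, IsClosed (V i) := fun i => GS_isClosed Φ _
  have hcomp : IsCompact (V 0) := (hcl 0).isCompact
  obtain ⟨X, hX⟩ := IsCompact.nonempty_iInter_of_sequence_nonempty_isCompact_isClosed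
    V hdec hne hcomp hcl
  refine ⟨X, fun Y hY => ?_⟩
  set F := hY.toFinset with hF
  set l : ℕ := F.sup fun a => Finset.univ.sup fun i => (a i).natAbs with hl
  have hXl : X ∈ V l := Set.mem_iInter.mp hX l
  refine hXl Y fun a ha => ?_
  by_contra hcon
  apply ha
  have haF : a ∈ F := hY.mem_toFinset.mpr hcon
  rw [box, Fintype.mem_piFinset]
  intro i
  have h1 : (a i).natAbs ≤ l := by
    refine le_trans (Finset.le_sup (f := fun i => (a i).natAbs) (Finset.mem_univ i)) ?_
    exact Finset.le_sup (f := fun a : Site d => Finset.univ.sup fun i => (a i).natAbs) haF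
  rw [Finset.mem_Icc]
  have : |a i| ≤ (l : ℤ) := by
    rw [Int.abs_eq_natAbs]
    exact_mod_cast h1
  exact abs_le.mp this


end QC
end

section
/- Let μ be a Borel probability measure on Ω = (ℤ^d → Fin n) that is invariant under every translation τ_a, a ∈ ℤ^d, and suppose the topological support of μ contains no periodic configuration. Then the support of μ is uncountable. -/
open Filter MeasureTheory

namespace QC

variable {d n : ℕ} {r : ℝ}

/-- `X` belongs to the topological support of `μ`: every open set containing `X` has
positive measure. -/
def MemSupport {d n : ℕ} (μ : Measure (Config d n)) (X : Config d n) : Prop :=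
  ∀ U : Set (Config d n), IsOpen U → X ∈ U → 0 < μ U

lemma translate_translate {d n : ℕ} (a b : Site d) (X : Config d n) :
    translate a (translate b X) = translate (a + b) X := by
  funext c
  simp [translate, sub_sub]

@[simp] lemma translate_zero {d n : ℕ} (X : Config d n) : translate (0 : Site d) X = X := by
  funext c; simp [translate]

lemma translate_injective {d n : ℕ} (a : Site d) :
    Function.Injective (translate a : Config d n → Config d n) := by
  intro X Y h
  have := congrArg (translate (-a)) h
  rwa [translate_translate, translate_translate, neg_add_cancel, translate_zero,
    translate_zero] at this

lemma measurable_translate {d n : ℕ} (a : Site d) :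
    Measurable (translate a : Config d n → Config d n) :=
  measurable_pi_lambda _ fun b => measurable_pi_apply (b - a)

/-- If a translation-invariant Borel probability measure on `Ω` has no
periodic configuration in its topological support, then its support is uncountable. -/
theorem support_uncountable_of_no_periodic
    {d n : ℕ} (hd : 1 ≤ d) (hn : 1 ≤ n)
    (μ : Measure (Config d n)) [IsProbabilityMeasure μ]
    (hinv : ∀ a : Site d, Measure.map (translate a) μ = μ)
    (hsupp : ∀ X : Config d n, MemSupport μ X → ¬ IsPeriodic X) :
    ¬ {X : Config d n | MemSupport μ X}.Countable := by
  intro hcount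
  set S := {X : Config d n | MemSupport μ X} with hS
  -- the complement of the support is null
  have hSc : μ Sᶜ = 0 := by
    obtain ⟨B, hBc, -, hB⟩ := TopologicalSpace.exists_countable_basis (Config d n)
    have hsub : Sᶜ ⊆ ⋃ U ∈ {U ∈ B | μ U = 0}, U := by
      intro X hX
      simp only [Set.mem_compl_iff, hS, Set.mem_setOf_eq, MemSupport] at hX
      push_neg at hX
      obtain ⟨U, hUo, hXU, hUμ⟩ := hX
      obtain ⟨V, hVB, hXV, hVU⟩ := hB.exists_subset_of_mem_open hXU hUo
      exact Set.mem_biUnion ⟨hVB, le_antisymm ((measure_mono hVU).trans hUμ) zero_le⟩ hXV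
    refine measure_mono_null hsub ?_
    exact (measure_biUnion_null_iff (hBc.mono (Set.sep_subset _ _))).2 fun U hU => hU.2
  -- find an atom in the support
  have hXpos : ∃ X ∈ S, 0 < μ {X} := by
    by_contra h
    push_neg at h
    have hS0 : μ S = 0 := by
      have : S = ⋃ x ∈ S, {x} := (Set.biUnion_of_singleton S).symm
      rw [this]
      exact (measure_biUnion_null_iff hcount).2 fun x hx =>
        le_antisymm (h x hx) zero_le
    have : μ (Set.univ : Set (Config d n)) ≤ μ S + μ Sᶜ := by
      rw [← Set.union_compl_self S]; exact measure_union_le _ _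
    rw [measure_univ, hS0, hSc] at this
    simp at this
  obtain ⟨X, hXS, hXμ⟩ := hXpos
  -- X is not periodic
  have hnp : ¬ IsPeriodic X := hsupp X hXS
  -- the orbit of X
  have hi : (0 : ℕ) < d := hd
  let e : ℤ → Site d := fun k => fun _ => k
  have he : Function.Injective e := fun k m h => congrFun h ⟨0, hi⟩
  let f : ℕ → Config d n := fun k => translate (e k) X
  have hfinj : Function.Injective f := by
    intro k m h
    have h2 : translate (e k - e m) X = X := by
      have := congrArg (translate (-(e m))) h
      rw [translate_translate, translate_translate, neg_add_cancel, translate_zero] at this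
      rw [sub_eq_neg_add]
      exact this
    have : e k - e m = 0 := by
      by_contra hne
      exact hnp ⟨e k - e m, hne, h2⟩
    rw [sub_eq_zero] at this
    exact_mod_cast he this
  -- each orbit point has the same positive measure
  have horb : ∀ k : ℕ, μ {f k} = μ {X} := by
    intro k
    have : μ {f k} = (Measure.map (translate (e k)) μ) {f k} := by rw [hinv]
    rw [this, Measure.map_apply (measurable_translate _) (measurableSet_singleton _)]
    congr 1
    ext Y
    simp only [Set.mem_preimage, Set.mem_singleton_iff]
    exact ⟨fun h => translate_injective _ h, fun h => by rw [h]⟩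
  -- contradiction : infinitely many disjoint singletons of equal positive measure
  have hdisj : Pairwise (Function.onFun Disjoint fun k => ({f k} : Set (Config d n))) := by
    intro i j hij
    simp [Function.onFun, Set.disjoint_singleton, hfinj.ne hij]
  have hunion : μ (⋃ k, {f k}) = ∑' _ : ℕ, μ {X} := by
    rw [measure_iUnion hdisj fun k => measurableSet_singleton _]
    simp [horb]
  have htop : (∑' _ : ℕ, μ {X}) = ⊤ :=
    ENNReal.tsum_const_eq_top_of_ne_zero hXμ.ne'
  have hle : μ (⋃ k, {f k}) ≤ 1 := by
    rw [← measure_univ (μ := μ)]; exact measure_mono (Set.subset_univ _)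
  rw [hunion, htop] at hle
  simp at hle

end QC
end

section
/- Instability direction of the stability criterion: assume the broken-bond setting for a potential Φ of range r on Ω = (ℤ^d → Fin n), and suppose the strict boundary condition fails for some arrangement ar of range < r, i.e., for every C > 0 there exist a ground-state configuration X_C and a local excitation Y_C ~ X_C with |n_ar(Y_C, X_C)| > C·B(Y_C). Then for every ε > 0 there exists a perturbation Ψ of range < r, supported on the single arrangement ar with |Ψ(ar)| ≤ ε, such that some ground-state configuration X of Φ is not a ground-state configuration of the perturbed Hamiltonian: there exists Y ~ X with H''(Y,X) < 0. -/
open Filter MeasureTheory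

namespace QC

variable {d n : ℕ} {r : ℝ}

deriving instance DecidableEq for Arr

section Aux

variable {d n : ℕ} {r : ℝ}

lemma Arr.mirror_mirror (ar : Arr d n) : ar.mirror.mirror = ar := by
  cases ar <;> simp [Arr.mirror]

lemma Arr.valid_mirror {ar : Arr d n} (h : ar.valid r) : ar.mirror.valid r := by
  cases ar with
  | single s => trivial
  | pair c s t => exact ⟨neg_ne_zero.2 h.1, by simpa using h.2⟩

lemma arrCount_pair_neg (Y X : Config d n) (c : Site d) (s t : Fin n) :
    arrCount Y X (.pair (-c) t s) = arrCount Y X (.pair c s t) := by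
  show (∑ᶠ a : Site d, _) = ∑ᶠ a : Site d, _
  rw [← finsum_comp_equiv (Equiv.addRight c)]
  apply finsum_congr
  intro a
  simp [Equiv.coe_addRight, add_neg_cancel_right, and_comm]

lemma pertSum_single (s : Fin n) (v : ℝ) (Y X : Config d n)
    (Ψ : Perturbation d n r)
    (hval : ∀ ar', Ψ.val ar' = if ar' = Arr.single s ∨ ar' = (Arr.single s : Arr d n).mirror
      then v else 0) :
    pertSum Ψ Y X = (arrCount Y X (.single s) : ℝ) * v := by
  unfold pertSum
  have h1 : ∀ s' : Fin n, Ψ.val (.single s') = if s' = s then v else 0 := by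
    intro s'; rw [hval]; simp [Arr.mirror]
  have h2 : ∀ c' (s' t' : Fin n), Ψ.val (.pair c' s' t') = 0 := by
    intro c' s' t'; rw [hval]; simp [Arr.mirror]
  simp only [h1, h2, mul_zero, Finset.sum_const_zero, finsum_zero, mul_ite, mul_zero]
  rw [Finset.sum_ite_eq' Finset.univ s fun s' => (arrCount Y X (.single s') : ℝ) * v]
  simp

lemma pertSum_pair (c : Site d) (hc : c ≠ -c) (s t : Fin n) (v : ℝ) (Y X : Config d n)
    (Ψ : Perturbation d n r)
    (hval : ∀ ar', Ψ.val ar' = if ar' = Arr.pair c s t ∨ ar' = (Arr.pair c s t : Arr d n).mirror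
      then v else 0) :
    pertSum Ψ Y X = (arrCount Y X (.pair c s t) : ℝ) * v := by
  have hc' : -c ≠ c := fun h => hc h.symm
  unfold pertSum
  have h1 : ∀ s' : Fin n, Ψ.val (.single s') = 0 := by
    intro s'; rw [hval]; simp [Arr.mirror]
  have h2 : ∀ c' (s' t' : Fin n), Ψ.val (.pair c' s' t') =
      if c' = c ∧ s' = s ∧ t' = t then v else if c' = -c ∧ s' = t ∧ t' = s then v else 0 := by
    intro c' s' t'; rw [hval]
    simp only [Arr.mirror, Arr.pair.injEq]
    by_cases hcc : c' = c
    · subst hcc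
      simp [hc]
    · by_cases hcc' : c' = -c
      · subst hcc'
        simp [hc']
      · simp [hcc, hcc']
  set F : Site d → ℝ := fun c' => ∑ s' : Fin n, ∑ t' : Fin n,
      (arrCount Y X (.pair c' s' t') : ℝ) * Ψ.val (.pair c' s' t') with hF
  have hsupp : Function.support F ⊆ (({c, -c} : Finset (Site d)) : Set (Site d)) := by
    intro c' hcc
    by_contra hmem
    apply hcc
    simp only [Finset.coe_insert, Finset.coe_singleton, Set.mem_insert_iff,
      Set.mem_singleton_iff, not_or] at hmem
    have : ∀ s' t' : Fin n, Ψ.val (.pair c' s' t') = 0 := by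
      intro s' t'; rw [h2]; simp [hmem.1, hmem.2]
    simp [hF, this]
  rw [finsum_eq_sum_of_support_subset F hsupp, Finset.sum_pair hc]
  have hFc : F c = (arrCount Y X (.pair c s t) : ℝ) * v := by
    have key : ∀ s' t' : Fin n, (arrCount Y X (.pair c s' t') : ℝ) * Ψ.val (.pair c s' t')
        = if s' = s then (if t' = t then (arrCount Y X (.pair c s t) : ℝ) * v else 0) else 0 := by
      intro s' t'
      rw [h2]
      by_cases h1' : s' = s <;> by_cases h2' : t' = t <;> simp [h1', h2', hc]
    have step : F c = ∑ s' : Fin n, ∑ t' : Fin n,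
        (if s' = s then (if t' = t then (arrCount Y X (.pair c s t) : ℝ) * v else 0) else 0) :=
      Finset.sum_congr rfl fun s' _ => Finset.sum_congr rfl fun t' _ => key s' t'
    rw [step]
    simp
  have hFnc : F (-c) = (arrCount Y X (.pair c s t) : ℝ) * v := by
    have key : ∀ s' t' : Fin n, (arrCount Y X (.pair (-c) s' t') : ℝ) * Ψ.val (.pair (-c) s' t')
        = if s' = t then (if t' = s then (arrCount Y X (.pair (-c) t s) : ℝ) * v else 0)
          else 0 := by
      intro s' t'
      rw [h2]
      by_cases h1' : s' = t <;> by_cases h2' : t' = s <;> simp [h1', h2', hc']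
    have step : F (-c) = ∑ s' : Fin n, ∑ t' : Fin n,
        (if s' = t then (if t' = s then (arrCount Y X (.pair (-c) t s) : ℝ) * v else 0)
          else 0) :=
      Finset.sum_congr rfl fun s' _ => Finset.sum_congr rfl fun t' _ => key s' t'
    rw [step]
    simp [arrCount_pair_neg]
  rw [hFc, hFnc]
  simp only [h1, mul_zero, Finset.sum_const_zero, zero_add]
  ring

end Aux

/-- Instability direction of the stability criterion: if the strict
boundary condition fails for some arrangement `ar` of range `< r`, then for every `ε > 0`
there is a perturbation of range `< r`, supported on the single arrangement `ar` and of
size `≤ ε`, for which some ground-state configuration of `Φ` is no longer a ground-state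
configuration. -/
theorem instability_of_strictBoundary_failure
    {d n : ℕ} (hd : 1 ≤ d) (hn : 1 ≤ n) {r : ℝ} (hr : 0 < r)
    (Φ : Potential d n r) (hbb : BrokenBondSetting Φ)
    (ar : Arr d n) (har : ar.valid r)
    (hfail : ∀ C : ℝ, 0 < C → ∃ X Y : Config d n,
      IsGroundState Φ X ∧ Excites Y X ∧
      C * (brokenCount Φ Y : ℝ) < |(arrCount Y X ar : ℝ)|) :
    ∀ ε : ℝ, 0 < ε → ∃ Ψ : Perturbation d n r,
      (∀ ar' : Arr d n, Ψ.val ar' ≠ 0 → ar' = ar ∨ ar' = ar.mirror) ∧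
      |Ψ.val ar| ≤ ε ∧
      ∃ X Y : Config d n, IsGroundState Φ X ∧ Excites Y X ∧ pertHam Φ Ψ Y X < 0 := by
  intro ε hε
  obtain ⟨X, Y, hX, hYX, hgt⟩ := hfail (1 / ε) (by positivity)
  set N : ℝ := (arrCount Y X ar : ℝ) with hN
  set v : ℝ := if 0 ≤ N then -ε else ε with hv
  have hvabs : |v| = ε := by
    rw [hv]; split <;> simp [abs_of_pos hε, abs_of_nonneg hε.le]
  have hNv : N * v = -(ε * |N|) := by
    rw [hv]
    by_cases h : 0 ≤ N
    · rw [if_pos h, abs_of_nonneg h]; ring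
    · rw [if_neg h, abs_of_neg (lt_of_not_ge h)]; ring
  have hBlt : (brokenCount Φ Y : ℝ) < ε * |N| := by
    have := mul_lt_mul_of_pos_left hgt hε
    rw [← mul_assoc, mul_one_div, div_self hε.ne', one_mul] at this
    exact this
  have hrel : relHam Φ Y X = (brokenCount Φ Y : ℝ) := hbb.relHam_eq X Y hX hYX
  refine ⟨⟨fun ar' => if ar' = ar ∨ ar' = ar.mirror then v else 0, ?_, ?_⟩, ?_, ?_, X, Y, hX,
    hYX, ?_⟩
  · intro ar'
    have e1 : ar'.mirror = ar ↔ ar' = ar.mirror :=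
      ⟨fun h => by rw [← h, Arr.mirror_mirror], fun h => by rw [h, Arr.mirror_mirror]⟩
    have e2 : ar'.mirror = ar.mirror ↔ ar' = ar :=
      ⟨fun h => by rw [← Arr.mirror_mirror ar', h, Arr.mirror_mirror],
        fun h => by rw [h]⟩
    simp only [e1, e2, or_comm]
  · intro ar' hval
    show (if ar' = ar ∨ ar' = ar.mirror then v else 0) = 0
    rw [if_neg]
    rintro (rfl | rfl)
    · exact hval har
    · exact hval (Arr.valid_mirror har)
  · intro ar' h
    by_contra hcon
    push_neg at hcon
    simp only [hcon.1, hcon.2, or_self, if_false] at h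
    exact h rfl
  · simp only [or_true, eq_self_iff_true, true_or, if_pos, hvabs]
    exact le_of_eq rfl
  · have hps : pertSum ⟨fun ar' => if ar' = ar ∨ ar' = ar.mirror then v else 0, by
        intro ar'
        have e1 : ar'.mirror = ar ↔ ar' = ar.mirror :=
          ⟨fun h => by rw [← h, Arr.mirror_mirror], fun h => by rw [h, Arr.mirror_mirror]⟩
        have e2 : ar'.mirror = ar.mirror ↔ ar' = ar :=
          ⟨fun h => by rw [← Arr.mirror_mirror ar', h, Arr.mirror_mirror],
            fun h => by rw [h]⟩
        simp only [e1, e2, or_comm], by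
        intro ar' hval
        show (if ar' = ar ∨ ar' = ar.mirror then v else 0) = 0
        rw [if_neg]
        rintro (rfl | rfl)
        · exact hval har
        · exact hval (Arr.valid_mirror har)⟩ Y X = N * v := by
      cases ar with
      | single s => exact pertSum_single s v Y X _ (fun _ => rfl)
      | pair c s t =>
          have hc : c ≠ -c := by
            intro h
            apply har.1
            funext i
            have h2 := congrFun h i
            simp only [Pi.neg_apply] at h2
            simp only [Pi.zero_apply]
            omega
          exact pertSum_pair c hc s t v Y X _ (fun _ => rfl)
    rw [pertHam, hps, hrel, hNv]
    linarith

end QC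
end
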